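/- For every λ ∈ k with λ ≠ 0, the endomorphism algebra End_{Λ_e}(B(1,λ)) is two-dimensional over k, spanned by the identity and the endomorphism τ (where τ(c_e) = c_{e+1} and τ vanishes on all other standard basis vectors), and is isomorphic as a k-algebra to k[X]/(X²). -/

import Mathlib

/-! Common framework: representations of the quiver Q_e / modules over the
generalized Brauer star algebra Λ_e, encoded as a module `V` together with
endomorphisms `v i` (images of the vertex idempotents), `a i` (images of the
arrows; `a i` is the arrow leaving vertex `i`, with `a ⟨e-1⟩` the arrow
`α_e : e → 1`) and `d` (image of the loop `δ`). -/

namespace GBTA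

structure PreRep (R : Type) [CommRing R] (e : ℕ) : Type 1 where
  V : Type
  [instAdd : AddCommGroup V]
  [instMod : Module R V]
  v : Fin e → Module.End R V
  a : Fin e → Module.End R V
  d : Module.End R V

attribute [instance] PreRep.instAdd PreRep.instMod

variable {R : Type} [CommRing R] {e : ℕ}

/-- The (0-based) index of the vertex `e`. -/
def ve (e : ℕ) [NeZero e] : Fin e :=
  ⟨e - 1, by have := Nat.pos_of_ne_zero (NeZero.ne e); omega⟩

/-- The (0-based) index of the vertex `e - 1`. -/
def vem (e : ℕ) [NeZero e] : Fin e :=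
  ⟨e - 2, by have := Nat.pos_of_ne_zero (NeZero.ne e); omega⟩

/-- The cycle `C_i`: the composite of the `e` cyclically consecutive arrows
starting with the arrow leaving vertex `i` (composites written right to left). -/
def cyc [NeZero e] (ρ : PreRep R e) (i : Fin e) : Module.End R ρ.V :=
  (((List.range e).reverse).map fun l => ρ.a (i + (⟨l % e, Nat.mod_lt _ (Nat.pos_of_ne_zero (NeZero.ne e))⟩ : Fin e))).prod

/-- The defining relations of the generalized Brauer star algebra `Λ_e`. -/
def Satisfies [NeZero e] (ρ : PreRep R e) : Prop :=
  (∀ i j : Fin e, i ≠ j → ρ.v i * ρ.v j = 0) ∧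
  (∀ i : Fin e, ρ.v i * ρ.v i = ρ.v i) ∧
  ((∑ i : Fin e, ρ.v i) = 1) ∧
  (∀ i : Fin e, ρ.a i = ρ.v (i + 1) * ρ.a i * ρ.v i) ∧
  (ρ.d = ρ.v (ve e) * ρ.d * ρ.v (ve e)) ∧
  (ρ.d * ρ.a (vem e) = 0) ∧
  (ρ.a (ve e) * ρ.d = 0) ∧
  (ρ.d * ρ.d = cyc ρ (ve e) * cyc ρ (ve e)) ∧
  (∀ i : Fin e, i ≠ ve e → ρ.a i * (cyc ρ i * cyc ρ i) = 0)

/-- The space of `Λ_e`-module homomorphisms `ρ → σ`: linear maps commuting with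
all the structure maps. -/
def homSet (ρ σ : PreRep R e) : Submodule R (ρ.V →ₗ[R] σ.V) where
  carrier := {f | (∀ i, f ∘ₗ ρ.v i = σ.v i ∘ₗ f) ∧ (∀ i, f ∘ₗ ρ.a i = σ.a i ∘ₗ f) ∧
    f ∘ₗ ρ.d = σ.d ∘ₗ f}
  add_mem' := by
    rintro f g ⟨hfv, hfa, hfd⟩ ⟨hgv, hga, hgd⟩
    exact ⟨fun i => by simp only [LinearMap.add_comp, LinearMap.comp_add, hfv i, hgv i],
      fun i => by simp only [LinearMap.add_comp, LinearMap.comp_add, hfa i, hga i],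
      by simp only [LinearMap.add_comp, LinearMap.comp_add, hfd, hgd]⟩
  zero_mem' := ⟨fun i => by simp, fun i => by simp, by simp⟩
  smul_mem' := by
    rintro c f ⟨hfv, hfa, hfd⟩
    exact ⟨fun i => by simp only [LinearMap.smul_comp, LinearMap.comp_smul, hfv i],
      fun i => by simp only [LinearMap.smul_comp, LinearMap.comp_smul, hfa i],
      by simp only [LinearMap.smul_comp, LinearMap.comp_smul, hfd]⟩

/-- Projectivity of a `Λ_e`-module, via the lifting property in the category of
`Λ_e`-modules. -/
def IsProjective [NeZero e] (P : PreRep R e) : Prop :=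
  Satisfies P ∧
  ∀ (A B : PreRep R e), Satisfies A → Satisfies B →
    ∀ p ∈ homSet A B, Function.Surjective p →
      ∀ g ∈ homSet P B, ∃ h ∈ homSet P A, p ∘ₗ h = g

/-- An endomorphism `f` of `ρ` factors through a projective `Λ_e`-module. -/
def FactorsThroughProjective [NeZero e] (ρ : PreRep R e) (f : ρ.V →ₗ[R] ρ.V) : Prop :=
  ∃ P : PreRep R e, IsProjective P ∧ ∃ g ∈ homSet ρ P, ∃ h ∈ homSet P ρ, f = h ∘ₗ g

/-- "The stable endomorphism ring of `ρ` is isomorphic to the scalars": the identity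
does not factor through a projective, and modulo endomorphisms factoring through
projectives every endomorphism is a scalar multiple of the identity. -/
def StableEndIsoScalars [NeZero e] (ρ : PreRep R e) : Prop :=
  (¬ FactorsThroughProjective ρ LinearMap.id) ∧
  ∀ f ∈ homSet ρ ρ, ∃ c : R, FactorsThroughProjective ρ (f - c • LinearMap.id)

/-- The linear map on `Fin m → W` sending the `src` coordinate to the `dst`
coordinate through `g`, and killing all other coordinates. -/
def mk1 {m : ℕ} {W : Type} [AddCommGroup W] [Module R W] (src dst : Fin m)
    (g : W →ₗ[R] W) : (Fin m → W) →ₗ[R] (Fin m → W) where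
  toFun x := fun r => if r = dst then g (x src) else 0
  map_add' x y := by funext r; by_cases h : r = dst <;> simp [h]
  map_smul' c x := by funext r; by_cases h : r = dst <;> simp [h]

/-- Projection onto the coordinates satisfying `S`. -/
def prj {m : ℕ} {W : Type} [AddCommGroup W] [Module R W] (S : Fin m → Prop)
    [DecidablePred S] : (Fin m → W) →ₗ[R] (Fin m → W) where
  toFun x := fun r => if S r then x r else 0
  map_add' x y := by funext r; by_cases h : S r <;> simp [h]
  map_smul' c x := by funext r; by_cases h : S r <;> simp [h]

/-- Last row index (`e`, 0-based) among `e+1` rows. -/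
def lastRow (e : ℕ) : Fin (e + 1) := ⟨e, Nat.lt_succ_self e⟩

/-- Second-to-last row index (`e-1`, 0-based) among `e+1` rows. -/
def sndRow (e : ℕ) : Fin (e + 1) := ⟨e - 1, by omega⟩

/-- The vertex carrying each of the `e+1` rows: row `r < e-1` sits at vertex `r`,
rows `e-1` and `e` sit at the vertex `e` (0-based index `e-1`). -/
def vrt (e : ℕ) [NeZero e] : Fin (e + 1) → Fin e := fun r =>
  if h : r.val < e - 1 then ⟨r.val, by omega⟩ else ve e


/-- The `n × n` Jordan block with eigenvalue `lam`. -/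
def jordan (R : Type) [CommRing R] (n : ℕ) (lam : R) : Matrix (Fin n) (Fin n) R :=
  Matrix.of fun i j => if i = j then lam else if (j : ℕ) = (i : ℕ) + 1 then 1 else 0

/-- The band module `B(n, lam)`. Rows `0, …, e-2` are the components `k^n` at the
vertices `1, …, e-1`; rows `e-1` and `e` are the two copies of `k^n` at vertex `e`. -/
@[reducible] def band (R : Type) [CommRing R] (e : ℕ) [NeZero e] (n : ℕ) (lam : R) : PreRep R e where
  V := Fin (e + 1) → Fin n → R
  v i := prj fun r => vrt e r = i
  a j :=
    if j.val = e - 1 then mk1 (sndRow e) ⟨0, by omega⟩ LinearMap.id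
    else if j.val = e - 2 then mk1 ⟨e - 2, by omega⟩ (lastRow e) LinearMap.id
    else mk1 ⟨j.val, Nat.lt_succ_of_lt j.isLt⟩ ⟨j.val + 1, Nat.succ_lt_succ j.isLt⟩ LinearMap.id
  d := mk1 (sndRow e) (lastRow e) (Matrix.mulVecLin (jordan R n lam))

/-- The band module `B(1, s)` (with `δ` acting through the scalar `s`); the standard
basis vector `c_i` (`1 ≤ i ≤ e-1`) is the `i-1`-st coordinate, `c_e` the `e-1`-st and
`c_{e+1}` the `e`-th. -/
@[reducible] def band1 (R : Type) [CommRing R] (e : ℕ) [NeZero e] (s : R) : PreRep R e where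
  V := Fin (e + 1) → R
  v i := prj fun r => vrt e r = i
  a j :=
    if j.val = e - 1 then mk1 (sndRow e) ⟨0, by omega⟩ LinearMap.id
    else if j.val = e - 2 then mk1 ⟨e - 2, by omega⟩ (lastRow e) LinearMap.id
    else mk1 ⟨j.val, Nat.lt_succ_of_lt j.isLt⟩ ⟨j.val + 1, Nat.succ_lt_succ j.isLt⟩ LinearMap.id
  d := mk1 (sndRow e) (lastRow e) (s • LinearMap.id)

/-- The projective module `P_e`, with basis `b_{i,1}, b_{i,2}` (row `i-1`) for
`1 ≤ i ≤ e-1` and `b_{e,1}, b_{e,2}` (row `e-1`), `b_{e,3}, b_{e,4}` (row `e`). -/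
@[reducible] def Pe (R : Type) [CommRing R] (e : ℕ) [NeZero e] : PreRep R e where
  V := Fin (e + 1) → Fin 2 → R
  v i := prj fun r => vrt e r = i
  a j :=
    if j.val = e - 1 then mk1 (sndRow e) ⟨0, by omega⟩ LinearMap.id
    else if j.val = e - 2 then
      mk1 ⟨e - 2, by omega⟩ (sndRow e) (Matrix.mulVecLin !![0, 0; 1, 0])
        + mk1 ⟨e - 2, by omega⟩ (lastRow e) (Matrix.mulVecLin !![0, 0; 0, 1])
    else mk1 ⟨j.val, Nat.lt_succ_of_lt j.isLt⟩ ⟨j.val + 1, Nat.succ_lt_succ j.isLt⟩ LinearMap.id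
  d := mk1 (sndRow e) (lastRow e) (Matrix.mulVecLin !![1, 0; 0, 0])
    + mk1 (lastRow e) (lastRow e) (Matrix.mulVecLin !![0, 0; 1, 0])

/-- `Mdef R e τ`: the representation with basis `m_1, …, m_{e+1}` (rows `0, …, e`),
`α_j(m_j) = m_{j+1}` for `j ≤ e-2`, `α_{e-1}(m_{e-1}) = τ · m_{e+1}`,
`α_e(m_e) = m_1`, `δ(m_e) = m_{e+1}`.  For `τ = 0` this is the string module `W`. -/
@[reducible] def Mdef (R : Type) [CommRing R] (e : ℕ) [NeZero e] (t : R) : PreRep R e where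
  V := Fin (e + 1) → R
  v i := prj fun r => vrt e r = i
  a j :=
    if j.val = e - 1 then mk1 (sndRow e) ⟨0, by omega⟩ LinearMap.id
    else if j.val = e - 2 then mk1 ⟨e - 2, by omega⟩ (lastRow e) (t • LinearMap.id)
    else mk1 ⟨j.val, Nat.lt_succ_of_lt j.isLt⟩ ⟨j.val + 1, Nat.succ_lt_succ j.isLt⟩ LinearMap.id
  d := mk1 (sndRow e) (lastRow e) LinearMap.id

/-- The uniserial module `U_{[i,j]}` (with `1 ≤ i ≤ j ≤ e`, 1-based). -/
@[reducible] def U (R : Type) [CommRing R] (e i j : ℕ) : PreRep R e where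
  V := Fin (j + 1 - i) → R
  v t := prj fun r => i - 1 + r.val = t.val
  a t :=
    if h : i ≤ t.val + 1 ∧ t.val + 1 ≤ j - 1 then
      mk1 ⟨t.val + 1 - i, by omega⟩ ⟨t.val + 2 - i, by omega⟩ LinearMap.id
    else 0
  d := 0

/-- The uniserial projective module `P_i` (`i0` is the 0-based index of the vertex),
with basis `p_0, …, p_{2e}` following the cycle of arrows twice around. -/
@[reducible] def Puni (R : Type) [CommRing R] (e : ℕ) [NeZero e] (i0 : ℕ) : PreRep R e where
  V := Fin (2 * e + 1) → R
  v t := prj fun r => (i0 + r.val) % e = t.val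
  a t := ∑ l : Fin (2 * e),
    if (i0 + l.val) % e = t.val then mk1 l.castSucc l.succ LinearMap.id else 0
  d := 0

/-- The simple module `S_e` at the vertex `e`. -/
@[reducible] def Se (R : Type) [CommRing R] (e : ℕ) [NeZero e] : PreRep R e where
  V := R
  v i := if i = ve e then 1 else 0
  a _ := 0
  d := 0

/-- Block upper triangular endomorphism `(x, y) ↦ (f x + θ y, f y)` of `V × V`. -/
def blk {V : Type} [AddCommGroup V] [Module R V] (f th : Module.End R V) :
    Module.End R (V × V) where
  toFun p := (f p.1 + th p.2, f p.2)
  map_add' p q := by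
    simp only [Prod.fst_add, Prod.snd_add, map_add, Prod.mk_add_mk, Prod.mk.injEq, and_true]
    abel
  map_smul' c p := by
    simp only [Prod.smul_fst, Prod.smul_snd, map_smul, Prod.smul_mk, Prod.mk.injEq,
      smul_add, RingHom.id_apply, and_self]

section Ext
variable [NeZero e]

/-- The data of a self-extension of `ρ`: for each generator of `Λ_e`, the
off-diagonal block of its action on `ρ.V × ρ.V`. -/
abbrev Cochain (ρ : PreRep R e) : Type :=
  (Fin e → Module.End R ρ.V) × (Fin e → Module.End R ρ.V) × Module.End R ρ.V

/-- The self-extension of `ρ` determined by the cochain `θ`. -/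
@[reducible] def extRep (ρ : PreRep R e) (th : Cochain ρ) : PreRep R e where
  V := ρ.V × ρ.V
  v i := blk (ρ.v i) (th.1 i)
  a i := blk (ρ.a i) (th.2.1 i)
  d := blk ρ.d th.2.2

/-- `θ` is a cocycle precisely when the corresponding extension is a `Λ_e`-module. -/
def IsCocycle (ρ : PreRep R e) (th : Cochain ρ) : Prop := Satisfies (extRep ρ th)

/-- The coboundary of `φ`; extensions differing by a coboundary are equivalent. -/
def bnd (ρ : PreRep R e) (phi : Module.End R ρ.V) : Cochain ρ :=
  (fun i => ρ.v i * phi - phi * ρ.v i, fun i => ρ.a i * phi - phi * ρ.a i,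
    ρ.d * phi - phi * ρ.d)

/-- `Ext¹_{Λ_e}(ρ, ρ)`, i.e. the space of self-extensions of `ρ` modulo equivalence
(equivalently cocycles modulo coboundaries), is one-dimensional. -/
def ExtSelfOneDimensional (ρ : PreRep R e) : Prop :=
  ∃ th0 : Cochain ρ, IsCocycle ρ th0 ∧ (∀ phi, th0 ≠ bnd ρ phi) ∧
    ∀ th : Cochain ρ, IsCocycle ρ th → ∃ (c : R) (phi : Module.End R ρ.V),
      th = c • th0 + bnd ρ phi

end Ext


/-- The endomorphism algebra of a representation. -/
def endAlg (ρ : PreRep R e) : Subalgebra R (Module.End R ρ.V) where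
  carrier := {f | (∀ i, f * ρ.v i = ρ.v i * f) ∧ (∀ i, f * ρ.a i = ρ.a i * f) ∧
    f * ρ.d = ρ.d * f}
  mul_mem' := by
    rintro f g ⟨hfv, hfa, hfd⟩ ⟨hgv, hga, hgd⟩
    refine ⟨fun i => ?_, fun i => ?_, ?_⟩
    · rw [mul_assoc, hgv i, ← mul_assoc, hfv i, mul_assoc]
    · rw [mul_assoc, hga i, ← mul_assoc, hfa i, mul_assoc]
    · rw [mul_assoc, hgd, ← mul_assoc, hfd, mul_assoc]
  one_mem' := ⟨fun i => by rw [one_mul, mul_one], fun i => by rw [one_mul, mul_one],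
    by rw [one_mul, mul_one]⟩
  add_mem' := by
    rintro f g ⟨hfv, hfa, hfd⟩ ⟨hgv, hga, hgd⟩
    exact ⟨fun i => by rw [add_mul, mul_add, hfv i, hgv i],
      fun i => by rw [add_mul, mul_add, hfa i, hga i],
      by rw [add_mul, mul_add, hfd, hgd]⟩
  zero_mem' := ⟨fun i => by rw [zero_mul, mul_zero], fun i => by rw [zero_mul, mul_zero],
    by rw [zero_mul, mul_zero]⟩
  algebraMap_mem' c :=
    ⟨fun i => Algebra.commutes c (ρ.v i), fun i => Algebra.commutes c (ρ.a i),
      Algebra.commutes c ρ.d⟩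

/-- The endomorphism `τ` of `B(1,λ)` (and of `W`): `c_e ↦ c_{e+1}`, all other
standard basis vectors to `0`. -/
def tau (R : Type) [CommRing R] (e : ℕ) : (Fin (e + 1) → R) →ₗ[R] (Fin (e + 1) → R) :=
  mk1 (sndRow e) (lastRow e) LinearMap.id

/-- The map `r₁ : B(1,λ) → P_e` (with parameter `μ` the coefficient on `b_{e,3}`):
`c_i ↦ b_{i,2}` for `1 ≤ i ≤ e-1`, `c_e ↦ b_{e,2} + μ b_{e,3}`, `c_{e+1} ↦ b_{e,4}`. -/
def r1 (R : Type) [CommRing R] (e : ℕ) (mu : R) :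
    (Fin (e + 1) → R) →ₗ[R] (Fin (e + 1) → Fin 2 → R) where
  toFun x := fun r c => if c = 1 then x r else if r = lastRow e then mu * x (sndRow e) else 0
  map_add' x y := by
    funext r c
    by_cases h : c = 1
    · simp [h]
    · by_cases h2 : r = lastRow e <;> simp [h, h2, mul_add]
  map_smul' t x := by
    funext r c
    by_cases h : c = 1
    · simp [h]
    · by_cases h2 : r = lastRow e <;> simp [h, h2] <;> ring

/-- The map `r₂ : B(1,λ) → P_e`: `c_e ↦ b_{e,4}`, all other basis vectors to `0`. -/
def r2 (R : Type) [CommRing R] (e : ℕ) :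
    (Fin (e + 1) → R) →ₗ[R] (Fin (e + 1) → Fin 2 → R) where
  toFun x := fun r c => if r = lastRow e ∧ c = 1 then x (sndRow e) else 0
  map_add' x y := by
    funext r c
    by_cases h : r = lastRow e ∧ c = 1 <;> simp [h]
  map_smul' t x := by
    funext r c
    by_cases h : r = lastRow e ∧ c = 1 <;> simp [h]

/-- The map `s₁ : P_e → B(1,λ)`: `b_{e,1} ↦ c_e`, `b_{e,2} ↦ c_{e+1}`,
`b_{e,3} ↦ λ c_{e+1}`, `b_{i,1} ↦ c_i`; zero on `b_{e,4}` and the `b_{i,2}`. -/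
def s1 (R : Type) [CommRing R] (e : ℕ) (lam : R) :
    (Fin (e + 1) → Fin 2 → R) →ₗ[R] (Fin (e + 1) → R) where
  toFun y := fun r =>
    if r = lastRow e then y (sndRow e) 1 + lam * y (lastRow e) 0 else y r 0
  map_add' x y := by
    funext r
    by_cases h : r = lastRow e <;> simp [h, mul_add] <;> ring
  map_smul' t x := by
    funext r
    by_cases h : r = lastRow e <;> simp [h] <;> ring

/-- The map `s₂ : P_e → B(1,λ)`: `b_{e,1} ↦ c_{e+1}`, all other basis vectors to `0`. -/
def s2 (R : Type) [CommRing R] (e : ℕ) :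
    (Fin (e + 1) → Fin 2 → R) →ₗ[R] (Fin (e + 1) → R) where
  toFun y := fun r => if r = lastRow e then y (sndRow e) 0 else 0
  map_add' x y := by funext r; by_cases h : r = lastRow e <;> simp [h]
  map_smul' t x := by funext r; by_cases h : r = lastRow e <;> simp [h]

/-- The map `g : W → P_e`, `w_e ↦ b_{e,3}`, `w_{e+1} ↦ b_{e,4}`, `w_j ↦ 0`. -/
def gW (R : Type) [CommRing R] (e : ℕ) :
    (Fin (e + 1) → R) →ₗ[R] (Fin (e + 1) → Fin 2 → R) where
  toFun x := fun r c =>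
    if r = lastRow e then (if c = 0 then x (sndRow e) else x (lastRow e)) else 0
  map_add' x y := by
    funext r c
    by_cases h : r = lastRow e <;> by_cases h2 : c = 0 <;> simp [h, h2]
  map_smul' t x := by
    funext r c
    by_cases h : r = lastRow e <;> by_cases h2 : c = 0 <;> simp [h, h2]

/-- The map `h : P_e → W`, `b_{e,1} ↦ w_e`, `b_{j,1} ↦ w_j`, `b_{e,3} ↦ w_{e+1}`,
zero on `b_{e,2}`, `b_{e,4}` and the `b_{j,2}`. -/
def hW (R : Type) [CommRing R] (e : ℕ) :
    (Fin (e + 1) → Fin 2 → R) →ₗ[R] (Fin (e + 1) → R) where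
  toFun y := fun r => y r 0
  map_add' x y := rfl
  map_smul' t x := rfl

/-! An endomorphism `f` of `B(1,λ)` commutes with the vertex idempotents, so `f c_e` lies in the
vertex-`e` component: `f c_e = c₁ c_e + c₂ c_{e+1}`. The arrows carry `c_e` along
`c_e ↦ c_1 ↦ ⋯ ↦ c_{e-1} ↦ c_{e+1}`, so an endomorphism vanishing at `c_e` vanishes everywhere;
applied to `f - c₁ - c₂ τ` this gives `f = c₁ + c₂ τ`. Evaluating at `c_e` shows that `1, τ` are
independent, and `τ² = 0`, so `X ↦ τ` induces a surjection `k[X]/(X²) → End(B(1,λ))` between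
two-dimensional spaces. -/

section Mk1

variable {m : ℕ} {W : Type} [AddCommGroup W] [Module R W]

lemma mk1_apply (src dst : Fin m) (g : W →ₗ[R] W) (x : Fin m → W) :
    mk1 src dst g x = Pi.single dst (g (x src)) := by
  funext r
  rw [Pi.single_apply]
  rfl

lemma prj_apply (S : Fin m → Prop) [DecidablePred S] (x : Fin m → W) (r : Fin m) :
    prj (R := R) S x r = if S r then x r else 0 := rfl

lemma mk1_mul_mk1_of_ne {s d s' d' : Fin m} (g g' : W →ₗ[R] W) (h : s ≠ d') :
    mk1 s d g * mk1 s' d' g' = 0 :=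
  LinearMap.ext fun x => by simp [mk1_apply, h]

lemma mk1_comm_prj {src dst : Fin m} (g : W →ₗ[R] W) (S : Fin m → Prop) [DecidablePred S]
    (h : S src ↔ S dst) : mk1 src dst g * prj S = prj S * mk1 src dst g := by
  refine LinearMap.ext fun x => funext fun r => ?_
  simp only [Module.End.mul_apply, mk1_apply, prj_apply, Pi.single_apply]
  by_cases hr : r = dst
  · subst hr
    by_cases hS : S r <;> simp [hS, h]
  · simp [hr]

end Mk1

lemma apply_single_eq_zero_of_comm_mk1 {m : ℕ} {src dst : Fin m} {f : Module.End R (Fin m → R)}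
    (hf : f * mk1 src dst LinearMap.id = mk1 src dst LinearMap.id * f)
    (h0 : f (Pi.single src 1) = 0) : f (Pi.single dst 1) = 0 := by
  simpa [mk1_apply, h0] using LinearMap.congr_fun hf (Pi.single src 1)

lemma apply_eq_zero_of_comm_prj {m : ℕ} {S : Fin m → Prop} [DecidablePred S]
    {f : Module.End R (Fin m → R)} (hf : f * prj S = prj S * f) {x : Fin m → R}
    (hx : prj (R := R) S x = x) {r : Fin m} (hr : ¬ S r) : f x r = 0 := by
  have h := congr_fun (LinearMap.congr_fun hf x) r
  rwa [Module.End.mul_apply, Module.End.mul_apply, hx, prj_apply, if_neg hr] at h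

lemma smul_one_add_smul_tau_apply_single (a b : R) :
    (a • 1 + b • tau R e) (Pi.single (sndRow e) 1) =
      Pi.single (sndRow e) a + Pi.single (lastRow e) b := by
  simp [tau, mk1_apply, ← Pi.single_smul]

section Band1

variable [NeZero e]

lemma sndRow_ne_lastRow : sndRow e ≠ lastRow e := by
  have := NeZero.pos e
  simp only [sndRow, lastRow, ne_eq, Fin.mk.injEq]
  omega

lemma eq_sndRow_or_eq_lastRow_or_lt (r : Fin (e + 1)) :
    r = sndRow e ∨ r = lastRow e ∨ r.val < e - 1 := by
  have := NeZero.pos e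
  simp only [sndRow, lastRow, Fin.ext_iff]
  omega

lemma vrt_sndRow : vrt e (sndRow e) = ve e :=
  dif_neg (by simp [sndRow])

lemma vrt_lastRow : vrt e (lastRow e) = ve e :=
  dif_neg (by simp [lastRow])

lemma vrt_ne_ve_of_lt {r : Fin (e + 1)} (hr : r.val < e - 1) : vrt e r ≠ ve e := by
  simp only [vrt, dif_pos hr, ve, ne_eq, Fin.mk.injEq]
  omega

lemma band1_a_ve (s : R) :
    (band1 R e s).a (ve e) = mk1 (sndRow e) ⟨0, by omega⟩ LinearMap.id :=
  if_pos rfl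

lemma band1_a_vem (he : 2 ≤ e) (s : R) :
    (band1 R e s).a (vem e) = mk1 ⟨e - 2, by omega⟩ (lastRow e) LinearMap.id :=
  (if_neg (by simp only [vem]; omega)).trans (if_pos rfl)

lemma band1_a_of_lt (s : R) {t : ℕ} (ht : t < e - 2) :
    (band1 R e s).a ⟨t, by omega⟩ = mk1 ⟨t, by omega⟩ ⟨t + 1, by omega⟩ LinearMap.id :=
  (if_neg (by simp only; omega)).trans (if_neg (by simp only; omega))

lemma tau_mul_self : tau R e * tau R e = 0 :=
  mk1_mul_mk1_of_ne _ _ sndRow_ne_lastRow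

lemma tau_mem_endAlg (he : 2 ≤ e) (s : R) : tau R e ∈ endAlg (band1 R e s) := by
  refine ⟨fun i => mk1_comm_prj _ _ (by rw [vrt_sndRow, vrt_lastRow]), fun j => ?_, ?_⟩
  · -- `τ` kills every arrow on both sides: no arrow ends at `c_e` or starts at `c_{e+1}`
    have hj := j.isLt
    show tau R e * (if _ then _ else _) = (if _ then _ else _) * tau R e
    split_ifs <;>
      rw [tau, mk1_mul_mk1_of_ne, mk1_mul_mk1_of_ne] <;>
      simp only [sndRow, lastRow, ne_eq, Fin.mk.injEq] <;> omega
  · rw [tau, mk1_mul_mk1_of_ne _ _ sndRow_ne_lastRow, mk1_mul_mk1_of_ne _ _ sndRow_ne_lastRow]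

lemma eq_zero_of_apply_single_sndRow (he : 2 ≤ e) {s : R} {g : Module.End R (Fin (e + 1) → R)}
    (hg : g ∈ endAlg (band1 R e s)) (h0 : g (Pi.single (sndRow e) 1) = 0) : g = 0 := by
  have ha := hg.2.1
  have h_first : g (Pi.single ⟨0, by omega⟩ 1) = 0 :=
    apply_single_eq_zero_of_comm_mk1 (band1_a_ve (e := e) s ▸ ha (ve e)) h0
  have h_low : ∀ t (ht : t < e - 1), g (Pi.single ⟨t, by omega⟩ 1) = 0 := by
    intro t
    induction t with
    | zero => exact fun _ => h_first
    | succ t ih =>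
      intro ht
      exact apply_single_eq_zero_of_comm_mk1
        (band1_a_of_lt s (by omega : t < e - 2) ▸ ha _) (ih (by omega))
  have h_last : g (Pi.single (lastRow e) 1) = 0 :=
    apply_single_eq_zero_of_comm_mk1 (band1_a_vem he s ▸ ha (vem e)) (h_low (e - 2) (by omega))
  refine (Pi.basisFun R (Fin (e + 1))).ext fun r => ?_
  rw [Pi.basisFun_apply, LinearMap.zero_apply]
  rcases eq_sndRow_or_eq_lastRow_or_lt r with rfl | rfl | hr
  exacts [h0, h_last, h_low r hr]

lemma eq_smul_one_add_smul_tau (he : 2 ≤ e) {s : R} {f : Module.End R (Fin (e + 1) → R)}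
    (hf : f ∈ endAlg (band1 R e s)) :
    f = f (Pi.single (sndRow e) 1) (sndRow e) • 1
      + f (Pi.single (sndRow e) 1) (lastRow e) • tau R e := by
  set x : Fin (e + 1) → R := Pi.single (sndRow e) 1
  set g := f - (f x (sndRow e) • 1 + f x (lastRow e) • tau R e)
  have hg : g ∈ endAlg (band1 R e s) :=
    sub_mem hf (add_mem (Subalgebra.smul_mem _ (one_mem _) _)
      (Subalgebra.smul_mem _ (tau_mem_endAlg he s) _))
  have hgx_eq : g x = f x - (Pi.single (sndRow e) (f x (sndRow e))
      + Pi.single (lastRow e) (f x (lastRow e))) := by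
    rw [LinearMap.sub_apply, smul_one_add_smul_tau_apply_single]
  have hgx : g x = 0 := by
    funext r
    rcases eq_sndRow_or_eq_lastRow_or_lt r with rfl | rfl | hr
    · simp [hgx_eq, sndRow_ne_lastRow]
    · simp [hgx_eq, sndRow_ne_lastRow.symm]
    · -- `g` preserves the vertex `e`, where `x = c_e` lives
      refine apply_eq_zero_of_comm_prj (hg.1 (ve e)) ?_ (vrt_ne_ve_of_lt hr)
      funext t
      by_cases ht : t = sndRow e
      · simp [ht, prj_apply, vrt_sndRow]
      · simp [x, ht, prj_apply]
  exact sub_eq_zero.mp (eq_zero_of_apply_single_sndRow he hg hgx)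

section Field

variable {k : Type} [Field k]

def tauEnd (he : 2 ≤ e) (s : k) : endAlg (band1 k e s) :=
  ⟨tau k e, tau_mem_endAlg he s⟩

lemma linearIndependent_one_tauEnd (he : 2 ≤ e) (s : k) :
    LinearIndependent k ![1, tauEnd he s] := by
  refine LinearIndependent.pair_iff.mpr fun a b hab => ?_
  have h : (Pi.single (sndRow e) a + Pi.single (lastRow e) b : Fin (e + 1) → k) = 0 := by
    rw [← smul_one_add_smul_tau_apply_single]
    exact LinearMap.congr_fun (congrArg Subtype.val hab) _
  exact ⟨by simpa [sndRow_ne_lastRow] using congr_fun h (sndRow e),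
    by simpa [sndRow_ne_lastRow.symm] using congr_fun h (lastRow e)⟩

lemma span_one_tauEnd (he : 2 ≤ e) (s : k) :
    ⊤ ≤ Submodule.span k (Set.range ![1, tauEnd he s]) := by
  rintro ⟨f, hf⟩ -
  rw [Matrix.range_cons_cons_empty, Submodule.mem_span_pair]
  exact ⟨_, _, Subtype.ext (eq_smul_one_add_smul_tau he hf).symm⟩

noncomputable def endAlgBasis (he : 2 ≤ e) (s : k) :
    Module.Basis (Fin 2) k (endAlg (band1 k e s)) :=
  .mk (linearIndependent_one_tauEnd he s) (span_one_tauEnd he s)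

lemma finrank_endAlg_band1 (he : 2 ≤ e) (s : k) :
    Module.finrank k (endAlg (band1 k e s)) = 2 := by
  rw [Module.finrank_eq_card_basis (endAlgBasis he s), Fintype.card_fin]

open Polynomial in
lemma nonempty_endAlg_band1_algEquiv (he : 2 ≤ e) (s : k) :
    Nonempty (endAlg (band1 k e s) ≃ₐ[k] k[X] ⧸ Ideal.span {(X : k[X]) ^ 2}) := by
  set T := tauEnd he s
  have hT : T * T = 0 := Subtype.ext tau_mul_self
  let φ := Ideal.Quotient.liftₐ (Ideal.span {(X : k[X]) ^ 2}) (aeval T) fun p hp => by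
    obtain ⟨q, rfl⟩ := Ideal.mem_span_singleton.mp hp
    rw [map_mul, map_pow, aeval_X, sq, hT, zero_mul]
  have hφ_surj : Function.Surjective φ := by
    rintro ⟨f, hf⟩
    refine ⟨Ideal.Quotient.mk _ (f (Pi.single (sndRow e) 1) (sndRow e) • 1
      + f (Pi.single (sndRow e) 1) (lastRow e) • X), Subtype.ext ?_⟩
    simp only [φ, Ideal.Quotient.liftₐ_apply]
    simp [T, tauEnd, ← eq_smul_one_add_smul_tau he hf]
  have hfinrank : Module.finrank k (k[X] ⧸ Ideal.span {(X : k[X]) ^ 2}) = 2 := by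
    rw [finrank_quotient_span_eq_natDegree, natDegree_X_pow]
  have := Module.Finite.of_basis (endAlgBasis he s)
  have := Module.finite_of_finrank_pos (hfinrank ▸ two_pos)
  have hφ_inj : Function.Injective φ :=
    (LinearMap.injective_iff_surjective_of_finrank_eq_finrank
      (hfinrank.trans (finrank_endAlg_band1 he s).symm) (f := φ.toLinearMap)).mpr hφ_surj
  exact ⟨(AlgEquiv.ofBijective φ ⟨hφ_inj, hφ_surj⟩).symm⟩

end Field

end Band1

theorem band1_end_general (k : Type) [Field k] (e : ℕ) (he : 2 ≤ e) [NeZero e]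
    (lam : k) :
    Module.finrank k (endAlg (band1 k e lam)) = 2 ∧
    (∀ f ∈ endAlg (band1 k e lam), ∃ c₁ c₂ : k,
      f = c₁ • (1 : Module.End k ((band1 k e lam).V))
        + c₂ • (tau k e : Module.End k ((band1 k e lam).V))) ∧
    Nonempty ((endAlg (band1 k e lam)) ≃ₐ[k]
      (Polynomial k ⧸ Ideal.span {(Polynomial.X : Polynomial k) ^ 2})) :=
  ⟨finrank_endAlg_band1 he lam, fun _ hf => ⟨_, _, eq_smul_one_add_smul_tau he hf⟩,
    nonempty_endAlg_band1_algEquiv he lam⟩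

/-- `End_{Λ_e}(B(1,λ))` is two-dimensional over `k`, spanned by
the identity and `τ`, and is isomorphic as a `k`-algebra to `k[X]/(X²)`. -/
theorem band1_end (k : Type) [Field k] (e : ℕ) (he : 2 ≤ e) [NeZero e]
    (lam : k) (hlam : lam ≠ 0) :
    Module.finrank k (endAlg (band1 k e lam)) = 2 ∧
    (∀ f ∈ endAlg (band1 k e lam), ∃ c₁ c₂ : k,
      f = c₁ • (1 : Module.End k ((band1 k e lam).V))
        + c₂ • (tau k e : Module.End k ((band1 k e lam).V))) ∧
    Nonempty ((endAlg (band1 k e lam)) ≃ₐ[k]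
      (Polynomial k ⧸ Ideal.span {(Polynomial.X : Polynomial k) ^ 2})) :=
  band1_end_general k e he lam

end GBTA
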